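/- Let 𝔤 be an s-step nilpotent Lie algebra with asymptotic grading (V_j)_{j=1}^s. If [V_1, V_j] ⊆ V_{1+j} for all j ∈ {1,…,s−1}, then (V_j)_{j=1}^s is a stratification, i.e. [V_1, V_j] = V_{j+1} for all j ∈ {1,…,s−1} and [V_1, V_s] = 0. -/
import Mathlib


/-- The span of brackets `⁅a,b⁆` with `a ∈ A`, `b ∈ B`. -/
def sbr {L : Type*} [LieRing L] [LieAlgebra ℝ L] (A B : Submodule ℝ L) : Submodule ℝ L :=
  Submodule.span ℝ {x : L | ∃ a ∈ A, ∃ b ∈ B, x = ⁅a, b⁆}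

/-- `Δpow Δ k = Δ^k`, the left-iterated bracket `[Δ,…,Δ]` (`k` factors); `Δ^0 := ⊥`. -/
def Δpow {L : Type*} [LieRing L] [LieAlgebra ℝ L] (Δ : Submodule ℝ L) : ℕ → Submodule ℝ L
  | 0 => ⊥
  | 1 => Δ
  | (k+2) => sbr Δ (Δpow Δ (k+1))

/-- `ΔB Δ j = Δ^{[j]} = Σ_{i=1}^j Δ^i`. -/
def ΔB {L : Type*} [LieRing L] [LieAlgebra ℝ L] (Δ : Submodule ℝ L) (j : ℕ) : Submodule ℝ L :=
  ⨆ i ∈ Finset.Icc 1 j, Δpow Δ i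

/-- Lower central series, indexed so that `lcs L 1 = 𝔤`, `lcs L (j+1) = [𝔤, lcs L j]`. -/
def lcs (L : Type*) [LieRing L] [LieAlgebra ℝ L] : ℕ → Submodule ℝ L
  | 0 => ⊤
  | 1 => ⊤
  | (j+2) => sbr ⊤ (lcs L (j+1))



section helpers
variable {L : Type*} [LieRing L] [LieAlgebra ℝ L]

lemma mem_sbr {A B : Submodule ℝ L} {a b : L} (ha : a ∈ A) (hb : b ∈ B) :
    ⁅a, b⁆ ∈ sbr A B :=
  Submodule.subset_span ⟨a, ha, b, hb, rfl⟩

lemma sbr_le_iff {A B C : Submodule ℝ L} :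
    sbr A B ≤ C ↔ ∀ a ∈ A, ∀ b ∈ B, ⁅a, b⁆ ∈ C := by
  constructor
  · intro h a ha b hb; exact h (mem_sbr ha hb)
  · intro h
    apply Submodule.span_le.2
    rintro x ⟨a, ha, b, hb, rfl⟩
    exact h a ha b hb

lemma lcs_succ (n : ℕ) : lcs L (n+2) = sbr ⊤ (lcs L (n+1)) := rfl

lemma lcs2_bracket (n : ℕ) : sbr (lcs L 2) (lcs L (n+1)) ≤ lcs L (n+3) := by
  rw [sbr_le_iff]
  intro a ha b hb
  have ha' : a ∈ Submodule.span ℝ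
      {x : L | ∃ p ∈ (⊤ : Submodule ℝ L), ∃ q ∈ lcs L 1, x = ⁅p, q⁆} := ha
  clear ha
  revert b
  induction ha' using Submodule.span_induction with
  | mem x hx =>
    obtain ⟨p, -, q, -, rfl⟩ := hx
    intro b hb
    have h1 : ⁅q, b⁆ ∈ lcs L (n+2) := mem_sbr Submodule.mem_top hb
    have h2 : ⁅p, b⁆ ∈ lcs L (n+2) := mem_sbr Submodule.mem_top hb
    rw [lie_lie]
    exact sub_mem (mem_sbr Submodule.mem_top h1) (mem_sbr Submodule.mem_top h2)
  | zero => intro b _; simp only [zero_lie]; exact zero_mem _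
  | add x y _ _ hx hy =>
    intro b hb; rw [add_lie]; exact add_mem (hx b hb) (hy b hb)
  | smul c x _ hx =>
    intro b hb; rw [smul_lie]; exact Submodule.smul_mem _ _ (hx b hb)

lemma sbr_mono {A A' B B' : Submodule ℝ L} (hA : A ≤ A') (hB : B ≤ B') :
    sbr A B ≤ sbr A' B' := by
  rw [sbr_le_iff]; intro a ha b hb; exact mem_sbr (hA ha) (hB hb)

end helpers

/-- if an asymptotic grading `(V j)_{j=1}^s` of an `s`-step nilpotent Lie
algebra satisfies `[V 1, V j] ⊆ V (j+1)` for all `j ∈ {1,…,s-1}`, then it is a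
stratification: `[V 1, V j] = V (j+1)` for `j < s` and `[V 1, V s] = 0`. -/
theorem stmt4 {L : Type*} [LieRing L] [LieAlgebra ℝ L] [FiniteDimensional ℝ L]
    (s : ℕ) (hs : 1 ≤ s)
    (hnil : lcs L (s+1) = ⊥) (hstep : lcs L s ≠ ⊥)
    (V : ℕ → Submodule ℝ L)
    (hV0 : ∀ j, j ∉ Finset.Icc 1 s → V j = ⊥)
    (hgrad : ∀ j ∈ Finset.Icc 1 s,
      lcs L j = V j ⊔ lcs L (j+1) ∧ V j ⊓ lcs L (j+1) = ⊥)
    (h1 : ∀ j ∈ Finset.Icc 1 (s-1), sbr (V 1) (V j) ≤ V (j+1)) :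
    (∀ j ∈ Finset.Icc 1 (s-1), sbr (V 1) (V j) = V (j+1)) ∧ sbr (V 1) (V s) = ⊥ := by
  constructor
  · intro j hj
    have hj' := hj
    rw [Finset.mem_Icc] at hj'
    obtain ⟨hj1, hj2⟩ := hj'
    have hjs : j ≤ s := by omega
    have hj1s : j + 1 ≤ s := by omega
    have hgj := hgrad j (Finset.mem_Icc.2 ⟨hj1, hjs⟩)
    have hgj1 := hgrad (j+1) (Finset.mem_Icc.2 ⟨by omega, hj1s⟩)
    have hg1 := hgrad 1 (Finset.mem_Icc.2 ⟨le_refl 1, hs⟩)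
    refine le_antisymm (h1 j hj) ?_
    intro v hv
    have hv1 : v ∈ lcs L (j+1) := by rw [hgj1.1]; exact Submodule.mem_sup_left hv
    obtain ⟨k, rfl⟩ : ∃ k, j = k + 1 := ⟨j - 1, by omega⟩
    have hkey : lcs L (k+2) ≤ sbr (V 1) (V (k+1)) ⊔ lcs L (k+3) := by
      rw [lcs_succ, sbr_le_iff]
      intro a ha b hb
      have ha2 : a ∈ V 1 ⊔ lcs L 2 := by
        rw [← hg1.1]; exact Submodule.mem_top
      obtain ⟨a1, ha1, a2, ha2', rfl⟩ := Submodule.mem_sup.1 ha2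
      have hb2 : b ∈ V (k+1) ⊔ lcs L (k+2) := by rw [← hgj.1]; exact hb
      obtain ⟨b1, hb1, b2, hb2', rfl⟩ := Submodule.mem_sup.1 hb2
      rw [add_lie]
      refine add_mem ?_ ?_
      · rw [lie_add]
        refine add_mem (Submodule.mem_sup_left (mem_sbr ha1 hb1)) ?_
        exact Submodule.mem_sup_right
          (mem_sbr Submodule.mem_top hb2' : ⁅a1, b2⁆ ∈ sbr ⊤ (lcs L (k+2)))
      · exact Submodule.mem_sup_right (lcs2_bracket k (mem_sbr ha2' hb))
    have hvk := hkey hv1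
    obtain ⟨x, hx, y, hy, hxy⟩ := Submodule.mem_sup.1 hvk
    have hxV : x ∈ V (k+1+1) := h1 (k+1) hj hx
    have hy0 : y = 0 := by
      have hym : y ∈ V (k+1+1) ⊓ lcs L (k+1+1+1) :=
        ⟨by simpa [← hxy] using sub_mem hv hxV, hy⟩
      rw [hgj1.2] at hym
      simpa using hym
    rw [← hxy, hy0, add_zero] at hv ⊢
    exact hx
  · have hgs := hgrad s (Finset.mem_Icc.2 ⟨hs, le_refl s⟩)
    have hVs : V s ≤ lcs L s := by rw [hgs.1]; exact le_sup_left
    rw [← le_bot_iff, ← hnil]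
    obtain ⟨k, rfl⟩ : ∃ k, s = k + 1 := ⟨s - 1, by omega⟩
    exact (sbr_mono le_top hVs).trans (le_of_eq (lcs_succ k).symm)
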